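/- arXiv:1510.01590 — 2 statements merged into one kernel-verified Lean document; each statement's English description precedes it below -/
import Mathlib

section
/- Let f : (ℂⁿ, 0) → (ℂ, 0) be a holomorphic germ of multiplicity m with lowest-degree homogeneous Taylor part f_m (homogeneous of degree m). If ‖z‖^m = o(‖∇f(z)‖) as z → 0, then ‖z‖^m = o(‖∇f_m(z)‖) as z → 0; in particular ∇f_m(z) = 0 only for z = 0, so f_m has an isolated singularity at the origin. -/
set_option maxHeartbeats 1000000
set_option synthInstance.maxHeartbeats 400000

open Filter Topology Asymptotics

/-- The partial derivative `∂f/∂zᵢ` of `f : ℂⁿ → ℂ` at the point `z`. -/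
noncomputable def pderivAt {n : ℕ} (f : (Fin n → ℂ) → ℂ) (i : Fin n) (z : Fin n → ℂ) : ℂ :=
  fderiv ℂ f z (Pi.single i 1)

/-- The gradient `∇f = (∂f/∂z₁, …, ∂f/∂zₙ)` of `f` at `z`. -/
noncomputable def gradAt {n : ℕ} (f : (Fin n → ℂ) → ℂ) (z : Fin n → ℂ) : Fin n → ℂ :=
  fun i => pderivAt f i z

/-- `f` is a germ `(ℂⁿ, 0) → (ℂ, 0)` with an isolated singularity at the origin:
`f(0) = 0`, the origin is a critical point of `f`, and it is an isolated point of the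
critical set `{z : ∇f(z) = 0}`. -/
def HasIsolatedSingularityAtZero {n : ℕ} (f : (Fin n → ℂ) → ℂ) : Prop :=
  f 0 = 0 ∧ gradAt f 0 = 0 ∧ ∀ᶠ z in 𝓝[≠] (0 : Fin n → ℂ), gradAt f z ≠ 0

/-- `m` is the multiplicity of `f` at `0`, i.e. the lowest degree occurring in the Taylor
expansion of `f` at the origin; equivalently (for `f` analytic at `0`), `f = O(‖z‖^m)`
but not `f = o(‖z‖^m)` as `z → 0`. -/
def HasMultiplicity {n : ℕ} (f : (Fin n → ℂ) → ℂ) (m : ℕ) : Prop :=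
  f =O[𝓝 (0 : Fin n → ℂ)] (fun z => ‖z‖ ^ m) ∧ ¬ f =o[𝓝 (0 : Fin n → ℂ)] (fun z => ‖z‖ ^ m)

/-!
Write `f = fm + g` with `g = O(‖z‖^(m+1))`. Since `g` is analytic, its derivative is
`O(‖z‖^m)`, hence `o(‖∇f‖)` by hypothesis; so `∇fm = ∇f - ∇g` is asymptotically equivalent to
`∇f` and `‖z‖^m = o(‖∇fm‖)`. The components of `∇fm` are homogeneous, so a nonzero zero of `∇fm`
would give a whole punctured line of zeros through the origin, contradicting that estimate.
-/

theorem isBigO_norm_pow_pow_of_le {E : Type*} [SeminormedAddCommGroup E] {a b : ℕ} (h : a ≤ b) :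
    (fun y : E => ‖y‖ ^ b) =O[𝓝 0] fun y => ‖y‖ ^ a := by
  refine IsBigO.of_bound 1 ?_
  filter_upwards [Metric.closedBall_mem_nhds (0 : E) one_pos] with y hy
  simp only [norm_pow, norm_norm, one_mul]
  exact pow_le_pow_of_le_one (norm_nonneg y) (mem_closedBall_zero_iff.mp hy) h

section Analytic

variable {𝕜 E F : Type*} [NontriviallyNormedField 𝕜] [NormedAddCommGroup E] [NormedSpace 𝕜 E]
  [NormedAddCommGroup F] [NormedSpace 𝕜 F] {g : E → F} {m : ℕ}

theorem HasFPowerSeriesAt.apply_eq_zero_of_isBigO_pow {p : FormalMultilinearSeries 𝕜 E F}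
    (hp : HasFPowerSeriesAt g p 0) (hg : g =O[𝓝 0] fun y => ‖y‖ ^ (m + 1)) :
    ∀ k ≤ m, ∀ y, p k (fun _ => y) = 0 := by
  intro k
  induction k using Nat.strong_induction_on with
  | _ k ih =>
    intro hk
    have hsum : p.partialSum (k + 1) = fun y => p k fun _ => y := by
      funext y
      refine Finset.sum_eq_single _ (fun j hj hjk => ?_) (by simp)
      have hjk : j < k := (Finset.mem_range_succ_iff.mp hj).lt_of_ne hjk
      exact ih j hjk (hjk.le.trans hk) y
    have hg' : g =O[𝓝 0] fun y => ‖y‖ ^ (k + 1) :=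
      hg.trans (isBigO_norm_pow_pow_of_le (by omega))
    refine IsBigO.continuousMultilinearMap_apply_eq_zero ?_
    simpa [hsum] using hg'.sub (hp.isBigO_sub_partialSum_pow (k + 1))

theorem HasFPowerSeriesOnBall.of_norm_le_of_apply_diag_eq {p q : FormalMultilinearSeries 𝕜 E F}
    {x : E} {r : ENNReal} (hp : HasFPowerSeriesOnBall g p x r) (hnorm : ∀ k, ‖q k‖ ≤ ‖p k‖)
    (hdiag : ∀ k y, q k (fun _ => y) = p k (fun _ => y)) : HasFPowerSeriesOnBall g q x r where
  r_le := hp.r_le.trans (FormalMultilinearSeries.radius_le_of_le hnorm)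
  r_pos := hp.r_pos
  hasSum hy := by simpa only [hdiag] using hp.hasSum hy

theorem HasFPowerSeriesAt.fderiv_isBigO_pow_of_eq_zero [CompleteSpace F]
    {q : FormalMultilinearSeries 𝕜 E F} (hq : HasFPowerSeriesAt g q 0) (hq0 : ∀ k ≤ m, q k = 0) :
    fderiv 𝕜 g =O[𝓝 0] fun y => ‖y‖ ^ m := by
  obtain ⟨r, hr⟩ := hq
  have hsum : q.derivSeries.partialSum m = 0 := by
    funext y
    exact Finset.sum_eq_zero fun k hk => by
      rw [q.derivSeries_eq_zero (hq0 (k + 1) (Finset.mem_range.mp hk))]; rfl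
  simpa [hsum] using hr.fderiv.hasFPowerSeriesAt.isBigO_sub_partialSum_pow m

/-- The hypothesis only forces the diagonal values `p k (fun _ => y)`, `k ≤ m`, of the Taylor
series to vanish, not the multilinear maps `p k` themselves; so these terms are removed from the
series first, after which `derivSeries` starts in degree `m`. -/
theorem AnalyticAt.fderiv_isBigO_pow [CompleteSpace F] (hg : AnalyticAt 𝕜 g 0)
    (h : g =O[𝓝 0] fun y => ‖y‖ ^ (m + 1)) : fderiv 𝕜 g =O[𝓝 0] fun y => ‖y‖ ^ m := by
  classical
  obtain ⟨p, r, hr⟩ := hg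
  let q : FormalMultilinearSeries 𝕜 E F := fun k => if k ≤ m then 0 else p k
  have hdiag := hr.hasFPowerSeriesAt.apply_eq_zero_of_isBigO_pow h
  have hq : HasFPowerSeriesOnBall g q 0 r := by
    refine hr.of_norm_le_of_apply_diag_eq (fun k => ?_) (fun k y => ?_) <;>
      by_cases hk : k ≤ m <;> simp [q, hk, hdiag]
  exact hq.hasFPowerSeriesAt.fderiv_isBigO_pow_of_eq_zero fun k hk => by simp [q, hk]

end Analytic

theorem eq_zero_of_isLittleO_of_map_smul_eq_zero {𝕜 E F : Type*} [NontriviallyNormedField 𝕜]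
    [NormedAddCommGroup E] [NormedSpace 𝕜 E] [NormedAddCommGroup F] {G : E → F} {m : ℕ}
    (ho : (fun z => ‖z‖ ^ m) =o[𝓝 0] G) (hG : ∀ (c : 𝕜) z, G z = 0 → G (c • z) = 0)
    {z : E} (hz : G z = 0) : z = 0 := by
  by_contra hz0
  have hline : Tendsto (fun c : 𝕜 => c • z) (𝓝[≠] 0) (𝓝 0) :=
    ((continuous_id.smul continuous_const).tendsto' 0 0 (zero_smul 𝕜 z)).mono_left
      nhdsWithin_le_nhds
  obtain ⟨c, hbound, hc⟩ :=
    ((hline.eventually (ho.bound one_pos)).and self_mem_nhdsWithin).exists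
  have hcz : ‖c • z‖ ^ m ≤ 0 := by simpa [hG c z hz] using hbound
  exact (pow_pos (norm_pos_iff.mpr (smul_ne_zero hc hz0)) m).not_ge hcz

namespace MvPolynomial

theorem IsHomogeneous.eval_smul {R σ : Type*} [CommSemiring R] {φ : MvPolynomial σ R} {n : ℕ}
    (hφ : φ.IsHomogeneous n) (c : R) (z : σ → R) :
    eval (c • z) φ = c ^ n * eval z φ := by
  rw [eval_eq, eval_eq, Finset.mul_sum]
  refine Finset.sum_congr rfl fun u hu => ?_
  simp only [Pi.smul_apply, smul_eq_mul, mul_pow, Finset.prod_mul_distrib,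
    Finset.prod_pow_eq_pow_sum]
  rw [← hφ (mem_support_iff.mp hu), Finsupp.weight_apply]
  simp [Finsupp.sum]
  ring

variable {𝕜 σ : Type*} [NontriviallyNormedField 𝕜] [Fintype σ]

theorem differentiable_eval (φ : MvPolynomial σ 𝕜) :
    Differentiable 𝕜 fun w : σ → 𝕜 => eval w φ := by
  induction φ using MvPolynomial.induction_on with
  | C a => simp
  | add p q hp hq => simp only [map_add]; exact hp.add hq
  | mul_X p j hp => simp only [map_mul, eval_X]; exact hp.mul (differentiable_apply j)

theorem fderiv_eval_apply_single [DecidableEq σ] (φ : MvPolynomial σ 𝕜) (i : σ) (z : σ → 𝕜) :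
    fderiv 𝕜 (fun w => eval w φ) z (Pi.single i 1) = eval z (pderiv i φ) := by
  induction φ using MvPolynomial.induction_on with
  | C a => simp
  | add p q hp hq =>
    simp only [map_add]
    rw [fderiv_fun_add (differentiable_eval p z) (differentiable_eval q z)]
    simp [hp, hq]
  | mul_X p j hp =>
    simp only [map_mul, eval_X]
    rw [fderiv_fun_mul (differentiable_eval p z) (differentiableAt_apply j z),
      (hasFDerivAt_apply j z).fderiv]
    simp [hp, pderiv_X, Pi.single_apply, eq_comm, apply_ite (eval z)]

end MvPolynomial

section Gradient

variable {n : ℕ}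

theorem gradAt_eval (φ : MvPolynomial (Fin n) ℂ) :
    gradAt (fun w => MvPolynomial.eval w φ) =
      fun z i => MvPolynomial.eval z (MvPolynomial.pderiv i φ) :=
  funext fun z => funext fun i => MvPolynomial.fderiv_eval_apply_single φ i z

theorem gradAt_sub {f g : (Fin n → ℂ) → ℂ} {z : Fin n → ℂ} (hf : DifferentiableAt ℂ f z)
    (hg : DifferentiableAt ℂ g z) :
    gradAt (fun w => f w - g w) z = gradAt f z - gradAt g z := by
  funext i
  simp [gradAt, pderivAt, fderiv_fun_sub hf hg]

theorem norm_gradAt_le (f : (Fin n → ℂ) → ℂ) (z : Fin n → ℂ) : ‖gradAt f z‖ ≤ ‖fderiv ℂ f z‖ :=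
  (pi_norm_le_iff_of_nonneg (norm_nonneg _)).mpr fun i =>
    ((fderiv ℂ f z).le_opNorm _).trans (by rw [Pi.norm_single, norm_one, mul_one])

end Gradient

theorem littleO_grad_of_littleO_grad_lowest_part_general {n m : ℕ} (f : (Fin n → ℂ) → ℂ)
    (hf : AnalyticAt ℂ f 0)
    (fm : MvPolynomial (Fin n) ℂ) (hfm : fm.IsHomogeneous m)
    (hlow : (fun z => f z - MvPolynomial.eval z fm) =O[𝓝 (0 : Fin n → ℂ)]
      fun z => ‖z‖ ^ (m + 1))
    (ho : (fun z : Fin n → ℂ => ‖z‖ ^ m) =o[𝓝 (0 : Fin n → ℂ)] fun z => ‖gradAt f z‖) :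
    ((fun z : Fin n → ℂ => ‖z‖ ^ m) =o[𝓝 (0 : Fin n → ℂ)]
        fun z => ‖fun i => MvPolynomial.eval z (MvPolynomial.pderiv i fm)‖) ∧
      ∀ z : Fin n → ℂ, (∀ i, MvPolynomial.eval z (MvPolynomial.pderiv i fm) = 0) → z = 0 := by
  let P : (Fin n → ℂ) → ℂ := fun z => MvPolynomial.eval z fm
  have hdiff : (fun z => gradAt f z - gradAt P z) =O[𝓝 0] fun z => ‖z‖ ^ m := by
    refine (IsBigO.of_bound 1 ?_).trans
      ((hf.fun_sub (AnalyticOnNhd.eval_mvPolynomial fm 0 trivial)).fderiv_isBigO_pow hlow)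
    filter_upwards [hf.eventually_analyticAt] with z hz
    rw [one_mul, ← gradAt_sub hz.differentiableAt (MvPolynomial.differentiable_eval fm z)]
    exact norm_gradAt_le _ z
  have hequiv : gradAt P ~[𝓝 0] gradAt f := by
    refine ((hdiff.trans_isLittleO ho.of_norm_right).neg_left).congr_left fun z => ?_
    simp
  have hlittle := ho.trans_isBigO hequiv.isBigO_symm.norm_left
  rw [gradAt_eval] at hlittle
  refine ⟨hlittle.norm_right, fun z hz =>
    eq_zero_of_isLittleO_of_map_smul_eq_zero (𝕜 := ℂ) hlittle (fun c w hw => ?_) (funext hz)⟩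
  funext i
  simp only [hfm.pderiv.eval_smul, congrFun hw i, Pi.zero_apply, mul_zero]

/-- Let `f : (ℂⁿ, 0) → (ℂ, 0)` be a holomorphic germ of multiplicity `m`
with lowest-degree homogeneous Taylor part `fm` (homogeneous of degree `m`). If
`‖z‖^m = o(‖∇f(z)‖)` as `z → 0`, then `‖z‖^m = o(‖∇fm(z)‖)` as `z → 0`; in particular
`∇fm(z) = 0` only for `z = 0`, so `fm` has an isolated singularity at the origin. -/
theorem littleO_grad_of_littleO_grad_lowest_part {n m : ℕ} (f : (Fin n → ℂ) → ℂ)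
    (hf : AnalyticAt ℂ f 0)
    (hmult : HasMultiplicity f m)
    (fm : MvPolynomial (Fin n) ℂ) (hfm : fm.IsHomogeneous m)
    (hlow : (fun z => f z - MvPolynomial.eval z fm) =O[𝓝 (0 : Fin n → ℂ)]
      fun z => ‖z‖ ^ (m + 1))
    (ho : (fun z : Fin n → ℂ => ‖z‖ ^ m) =o[𝓝 (0 : Fin n → ℂ)] fun z => ‖gradAt f z‖) :
    ((fun z : Fin n → ℂ => ‖z‖ ^ m) =o[𝓝 (0 : Fin n → ℂ)]
        fun z => ‖fun i => MvPolynomial.eval z (MvPolynomial.pderiv i fm)‖) ∧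
      ∀ z : Fin n → ℂ, (∀ i, MvPolynomial.eval z (MvPolynomial.pderiv i fm) = 0) → z = 0 :=
  littleO_grad_of_littleO_grad_lowest_part_general f hf fm hfm hlow ho
end

section
/- Let h be a homogeneous polynomial of degree m ≥ 2 in n complex variables z₁, …, zₙ with an isolated singularity at the origin (∇h(z) = 0 only for z = 0). Then for every index k ∈ {1, …, n} there exists an index j ∈ {1, …, n} such that the coefficient of the monomial z_k^{m−1} z_j in h is nonzero (the case j = k giving the monomial z_k^m). -/
/-!
If every coefficient of `z_k^{m-1} z_j` in `h` vanished, then each `∂h/∂z_j`, a homogeneous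
polynomial of degree `m - 1`, would vanish at the basis vector `e_k`: the value of a homogeneous
polynomial of degree `d` at `e_k` is its coefficient of `z_k^d`, and the coefficient of
`z_k^{m-1}` in `∂h/∂z_j` is a multiple of that of `z_k^{m-1} z_j` in `h`. So `e_k` would be
a singular point of `h` other than the origin.
-/

namespace MvPolynomial

theorem IsHomogeneous.eval_piSingle_one {σ R : Type*} [CommSemiring R] [DecidableEq σ]
    {p : MvPolynomial σ R} {d : ℕ} (hp : p.IsHomogeneous d) (k : σ) :
    eval (Pi.single k 1) p = coeff (Finsupp.single k d) p := by
  rw [eval_eq, Finset.sum_eq_single (Finsupp.single k d)]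
  · rw [Finset.prod_eq_one, mul_one]
    intro i hi
    rw [Finset.mem_singleton.mp (Finsupp.support_single_subset hi), Pi.single_eq_same, one_pow]
  · intro e he hne
    obtain ⟨j, hj, hjk⟩ : ∃ j ∈ e.support, j ≠ k := by
      by_contra! hsupp
      have he_single : e = Finsupp.single k (e k) :=
        Finsupp.support_subset_singleton.mp fun j hj => Finset.mem_singleton.mpr (hsupp j hj)
      have hdeg : e.degree = d := by
        rw [Finsupp.degree_eq_weight_one]
        exact hp (mem_support_iff.mp he)
      apply hne
      rw [← hdeg, he_single, Finsupp.degree_single]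
    have hfactor : (Pi.single k 1 : σ → R) j ^ e j = 0 := by
      rw [Pi.single_eq_of_ne hjk, zero_pow (Finsupp.mem_support_iff.mp hj)]
    rw [Finset.prod_eq_zero hj hfactor, mul_zero]
  · intro hk
    rw [notMem_support_iff.mp hk, zero_mul]

end MvPolynomial

theorem exists_monomial_of_isolated_singularity_general {n m : ℕ}
    (h : MvPolynomial (Fin n) ℂ) (hh : h.IsHomogeneous m)
    (hiso : ∀ z : Fin n → ℂ, (∀ i, MvPolynomial.eval z (MvPolynomial.pderiv i h) = 0) → z = 0) :
    ∀ k : Fin n, ∃ j : Fin n,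
      MvPolynomial.coeff (Finsupp.single k (m - 1) + Finsupp.single j 1) h ≠ 0 := by
  intro k
  by_contra! hcoeff
  have hsingular : ∀ j, MvPolynomial.eval (Pi.single k 1) (MvPolynomial.pderiv j h) = 0 :=
    fun j => by rw [hh.pderiv.eval_piSingle_one, MvPolynomial.coeff_pderiv, hcoeff j, zero_mul]
  simpa using congrFun (hiso _ hsingular) k

/-- Let `h` be a homogeneous polynomial of degree `m ≥ 2` in `n` complex
variables with an isolated singularity at the origin (`∇h(z) = 0` only for `z = 0`). Then
for every index `k` there is an index `j` such that the coefficient of `z_k^{m-1} z_j` in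
`h` is nonzero (the case `j = k` giving the monomial `z_k^m`). -/
theorem exists_monomial_of_isolated_singularity {n m : ℕ} (hm : 2 ≤ m)
    (h : MvPolynomial (Fin n) ℂ) (hh : h.IsHomogeneous m)
    (hiso : ∀ z : Fin n → ℂ, (∀ i, MvPolynomial.eval z (MvPolynomial.pderiv i h) = 0) → z = 0) :
    ∀ k : Fin n, ∃ j : Fin n,
      MvPolynomial.coeff (Finsupp.single k (m - 1) + Finsupp.single j 1) h ≠ 0 :=
  exists_monomial_of_isolated_singularity_general h hh hiso
end
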